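/- (Main theorem: O(1/T) convergence of herded Gibbs on complete graphs) For a fully connected graph, with herded Gibbs using a fixed scanning order and the corresponding Gibbs sweep kernel having Dobrushin coefficient η < 1, there exist constants l > 0 and B > 0 such that d_v(P_T^{(τ)} − π) ≤ λ/T for all T ≥ T* and τ > τ*(T), where λ = 2N(1+η)/(l(1−η)), T* = 2B/l, and τ*(T) = log_{2/(1+η)}((1−η)lT/(4N)). -/

import Mathlib

/-! Herding keeps every weight in a window of bounded width, and a weight changes in a sweep
exactly by `π(Xᵢ = 1 | x₋ᵢ) − 𝟙[Xᵢ = 1]` when the conditioning state `x₋ᵢ` is visited. Telescoping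
over `T` sweeps, the empirical transition counts therefore match the Gibbs conditionals up to
an error `O(1)`, so one sweep maps the empirical distribution `P_T^{(τ)}` to `P_T^{(τ+1)}` up to
`O(1/T)` in total variation. With the Dobrushin contraction of the sweep kernel this gives
`d_{τ+1} ≤ η d_τ + c`, `c = O(1/T)`, hence `d_τ ≤ η^τ + c / (1 - η)`; after the burn-in `τ*(T)`
the geometric term is `O(1/T)` as well. -/

open Finset

/-- Joint states of `N` binary variables. -/
abbrev GState (N : ℕ) := Fin N → Bool

/-- Full conditional probability π(Xᵢ = b | x₋ᵢ) for a target distribution π. -/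
noncomputable def condProb {N : ℕ} (π : GState N → ℝ) (i : Fin N) (x : GState N)
    (b : Bool) : ℝ :=
  π (Function.update x i b) / (π (Function.update x i true) + π (Function.update x i false))

/-- Variable updated at step `t ≥ 1` of a fixed systematic scan (step kN + i with
1 ≤ i ≤ N updates the i-th variable, i.e. index i − 1). -/
def scanVar (N : ℕ) (hN : 0 < N) (t : ℕ) : Fin N := ⟨(t - 1) % N, Nat.mod_lt _ hN⟩

/-- A herded Gibbs trajectory on a fully connected graph of `N` binary variables with
target `π`: one weight per variable `i` and per assignment of all the other variables
(weights are indexed by full states but only the off-`i` coordinates matter); at step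
`t+1` the scanned variable emits 𝟙[w > 0] and only its active weight is updated. -/
structure HerdedGibbs (N : ℕ) (hN : 0 < N) (π : GState N → ℝ) where
  X : ℕ → GState N
  W : ℕ → Fin N → GState N → ℝ
  init_support : 0 < π (X 0)
  init_w : ∀ i x, condProb π i x true - 1 < W 0 i x ∧ W 0 i x ≤ condProb π i x true
  step_other : ∀ t j, j ≠ scanVar N hN (t + 1) → X (t + 1) j = X t j
  step_cur : ∀ t, X (t + 1) (scanVar N hN (t + 1))
      = decide (0 < W t (scanVar N hN (t + 1)) (X t))
  w_active : ∀ t x, (∀ j, j ≠ scanVar N hN (t + 1) → x j = X t j) →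
      W (t + 1) (scanVar N hN (t + 1)) x
        = W t (scanVar N hN (t + 1)) x + condProb π (scanVar N hN (t + 1)) x true
          - (if X (t + 1) (scanVar N hN (t + 1)) = true then 1 else 0)
  w_frozen : ∀ t i x, ¬(i = scanVar N hN (t + 1) ∧ ∀ j, j ≠ i → x j = X t j) →
      W (t + 1) i x = W t i x

/-- Transition matrix 𝒯ᵢ of regular Gibbs updating variable `i`. -/
noncomputable def stepKernel {N : ℕ} (π : GState N → ℝ) (i : Fin N) :
    Matrix (GState N) (GState N) ℝ :=
  fun x y => if ∀ j, j ≠ i → x j = y j then condProb π i x (y i) else 0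

/-- Full-sweep Gibbs transition kernel 𝒯 = 𝒯₁𝒯₂⋯𝒯_N. -/
noncomputable def sweepKernel {N : ℕ} (π : GState N → ℝ) :
    Matrix (GState N) (GState N) ℝ :=
  (List.ofFn fun i : Fin N => stepKernel π i).prod

/-- Total variation distance d_v(μ − ν) = ‖μ − ν‖₁ / 2 on a finite state space. -/
noncomputable def tvDist {α : Type*} [Fintype α] (μ ν : α → ℝ) : ℝ :=
  (∑ x, |μ x - ν x|) / 2

/-- Dobrushin ergodic coefficient of a transition matrix. -/
noncomputable def dobrushin {α : Type*} [Fintype α] (K : Matrix α α ℝ) : ℝ :=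
  ⨆ x, ⨆ x', tvDist (K x) (K x')

/-- Empirical distribution of `T` end-of-sweep samples starting at sweep `τ`. -/
noncomputable def empDist {N : ℕ} (X : ℕ → GState N) (τ T : ℕ) : GState N → ℝ :=
  fun x => (((Finset.Ico τ (τ + T)).filter fun k => X (k * N) = x).card : ℝ) / T

/-- N_num: number of occurrences of the joint state (x₋ᵢ, b) at substep `i` of sweeps
τ, …, τ+T−1. -/
def empNum {N : ℕ} (hN : 0 < N) (X : ℕ → GState N) (τ T i : ℕ) (x : GState N)
    (b : Bool) : ℕ :=
  ((Finset.Ico τ (τ + T)).filter fun k =>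
    (∀ j, j ≠ scanVar N hN i → X (k * N + i) j = x j)
      ∧ X (k * N + i) (scanVar N hN i) = b).card

/-- N_den: number of occurrences of the conditioning state x₋ᵢ at substep `i − 1`. -/
def empDen {N : ℕ} (hN : 0 < N) (X : ℕ → GState N) (τ T i : ℕ) (x : GState N) : ℕ :=
  ((Finset.Ico τ (τ + T)).filter fun k =>
    ∀ j, j ≠ scanVar N hN i → X (k * N + i - 1) j = x j).card

/-- Empirical herded Gibbs single-step transition kernel T̃⁽ᵗ⁾_{T,i}; entries with an
unvisited conditioning state are set to the regular Gibbs kernel. -/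
noncomputable def empStepKernel {N : ℕ} (hN : 0 < N) (π : GState N → ℝ)
    (X : ℕ → GState N) (τ T i : ℕ) : Matrix (GState N) (GState N) ℝ :=
  fun x y => if ∀ j, j ≠ scanVar N hN i → x j = y j then
      (if empDen hN X τ T i x = 0 then condProb π (scanVar N hN i) x (y (scanVar N hN i))
       else (empNum hN X τ T i x (y (scanVar N hN i)) : ℝ) / (empDen hN X τ T i x : ℝ))
    else 0

/-- Empirical full-sweep herded Gibbs kernel T̃⁽ᵗ⁾_T = T̃⁽ᵗ⁾_{T,1}⋯T̃⁽ᵗ⁾_{T,N}. -/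
noncomputable def empSweepKernel {N : ℕ} (hN : 0 < N) (π : GState N → ℝ)
    (X : ℕ → GState N) (τ T : ℕ) : Matrix (GState N) (GState N) ℝ :=
  (List.ofFn fun i : Fin N => empStepKernel hN π X τ T (i + 1)).prod

open Matrix

section Kernels

variable {α : Type*} [Fintype α]

def IsSubstochastic (K : Matrix α α ℝ) : Prop :=
  (∀ x y, 0 ≤ K x y) ∧ ∀ x, ∑ y, K x y ≤ 1

lemma isSubstochastic_one [DecidableEq α] : IsSubstochastic (1 : Matrix α α ℝ) :=
  ⟨fun x y => by rw [Matrix.one_apply]; split_ifs <;> norm_num,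
    fun x => by simp [Matrix.one_apply]⟩

lemma IsSubstochastic.mul {K L : Matrix α α ℝ} (hK : IsSubstochastic K)
    (hL : IsSubstochastic L) : IsSubstochastic (K * L) := by
  refine ⟨fun x y => sum_nonneg fun z _ => mul_nonneg (hK.1 x z) (hL.1 z y), fun x => ?_⟩
  calc ∑ y, (K * L) x y = ∑ z, K x z * ∑ y, L z y := by
        simp only [Matrix.mul_apply, mul_sum]; exact sum_comm
    _ ≤ ∑ z, K x z := sum_le_sum fun z _ => mul_le_of_le_one_right (hK.1 x z) (hL.2 z)
    _ ≤ 1 := hK.2 x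

lemma isSubstochastic_list_prod [DecidableEq α] {L : List (Matrix α α ℝ)}
    (hL : ∀ K ∈ L, IsSubstochastic K) : IsSubstochastic L.prod := by
  induction L with
  | nil => exact isSubstochastic_one
  | cons K L ih =>
    rw [List.forall_mem_cons] at hL
    exact hL.1.mul (ih hL.2)

lemma vecMul_list_prod_eq_self [DecidableEq α] {L : List (Matrix α α ℝ)} {μ : α → ℝ}
    (hL : ∀ K ∈ L, μ ᵥ* K = μ) : μ ᵥ* L.prod = μ := by
  induction L with
  | nil => simp
  | cons K L ih =>
    rw [List.forall_mem_cons] at hL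
    rw [List.prod_cons, ← Matrix.vecMul_vecMul, hL.1, ih hL.2]

lemma tvDist_comm (μ ν : α → ℝ) : tvDist μ ν = tvDist ν μ := by
  simp only [tvDist, abs_sub_comm]

lemma tvDist_triangle (μ ν ρ : α → ℝ) : tvDist μ ρ ≤ tvDist μ ν + tvDist ν ρ := by
  unfold tvDist
  rw [← add_div, ← sum_add_distrib]
  gcongr with x
  exact abs_sub_le _ _ _

lemma tvDist_le_one {μ ν : α → ℝ} (hμ0 : ∀ x, 0 ≤ μ x) (hν0 : ∀ x, 0 ≤ ν x)
    (hμ1 : ∑ x, μ x = 1) (hν1 : ∑ x, ν x = 1) : tvDist μ ν ≤ 1 := by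
  have h : ∑ x, |μ x - ν x| ≤ ∑ x, (μ x + ν x) := sum_le_sum fun x _ =>
    abs_sub_le_iff.2 ⟨by linarith [hν0 x], by linarith [hμ0 x]⟩
  rw [sum_add_distrib, hμ1, hν1] at h
  unfold tvDist
  linarith

lemma tvDist_vecMul_le {K : Matrix α α ℝ} (hK : IsSubstochastic K) (μ ν : α → ℝ) :
    tvDist (μ ᵥ* K) (ν ᵥ* K) ≤ tvDist μ ν := by
  unfold tvDist
  gcongr ?_ / 2
  calc ∑ y, |(μ ᵥ* K) y - (ν ᵥ* K) y| = ∑ y, |∑ x, (μ x - ν x) * K x y| := by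
        simp only [vecMul, dotProduct, ← sum_sub_distrib, sub_mul]
    _ ≤ ∑ y, ∑ x, |μ x - ν x| * K x y := by
        gcongr with y
        refine (abs_sum_le_sum_abs _ _).trans_eq (sum_congr rfl fun x _ => ?_)
        rw [abs_mul, abs_of_nonneg (hK.1 x y)]
    _ = ∑ x, |μ x - ν x| * ∑ y, K x y := by rw [sum_comm]; simp only [mul_sum]
    _ ≤ ∑ x, |μ x - ν x| :=
        sum_le_sum fun x _ => mul_le_of_le_one_right (abs_nonneg _) (hK.2 x)

lemma tvDist_le_dobrushin (K : Matrix α α ℝ) (x x' : α) :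
    tvDist (K x) (K x') ≤ dobrushin K :=
  (le_ciSup (Set.finite_range _).bddAbove x').trans
    (le_ciSup (f := fun z => ⨆ x', tvDist (K z) (K x')) (Set.finite_range _).bddAbove x)

lemma dobrushin_nonneg (K : Matrix α α ℝ) : 0 ≤ dobrushin K :=
  Real.iSup_nonneg fun _ => Real.iSup_nonneg fun _ => by unfold tvDist; positivity

lemma tvDist_vecMul_le_dobrushin (K : Matrix α α ℝ) {μ ν : α → ℝ}
    (hμν : ∑ x, μ x = ∑ x, ν x) :
    tvDist (μ ᵥ* K) (ν ᵥ* K) ≤ dobrushin K * tvDist μ ν := by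
  rcases isEmpty_or_nonempty α with hα | hα
  · simp [tvDist]
  set η := dobrushin K
  set g := μ - ν
  have hg : ∑ x, g x = 0 := by simp [g, sum_sub_distrib, hμν]
  -- `‖g ᵥ* K‖₁ = ∑ x, g x * f x`, where `f` oscillates by at most `2η`; as `∑ g = 0`, `f` may
  -- be centred before estimating
  set s : α → ℝ := fun y => if 0 ≤ (g ᵥ* K) y then 1 else -1
  set f : α → ℝ := fun x => ∑ y, s y * K x y
  have hs : ∀ y a, s y * a ≤ |a| := fun y a => by
    simp only [s]; split_ifs <;> linarith [le_abs_self a, neg_abs_le a]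
  have hosc : ∀ x x', f x - f x' ≤ 2 * η := fun x x' => calc
    f x - f x' = ∑ y, s y * (K x y - K x' y) := by simp only [f, ← sum_sub_distrib, mul_sub]
    _ ≤ ∑ y, |K x y - K x' y| := sum_le_sum fun y _ => hs y _
    _ ≤ 2 * η := by have := tvDist_le_dobrushin K x x'; unfold tvDist at this; linarith
  obtain ⟨x₀, hx₀⟩ := Finite.exists_min f
  have hf : ∀ x, |f x - (f x₀ + η)| ≤ η := fun x =>
    abs_le.2 ⟨by linarith [hx₀ x], by linarith [hosc x x₀]⟩
  unfold tvDist
  rw [mul_div_assoc']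
  gcongr ?_ / 2
  calc ∑ y, |(μ ᵥ* K) y - (ν ᵥ* K) y| = ∑ y, s y * (g ᵥ* K) y := by
        refine sum_congr rfl fun y _ => ?_
        rw [← Pi.sub_apply (μ ᵥ* K), ← Matrix.sub_vecMul]
        simp only [s]; split_ifs with h
        · rw [abs_of_nonneg h, one_mul]
        · rw [abs_of_neg (not_le.1 h), neg_one_mul]
    _ = ∑ x, g x * (f x - (f x₀ + η)) := by
        simp only [Matrix.vecMul, dotProduct, f, mul_sub, mul_sum, sum_sub_distrib,
          ← sum_mul, hg, zero_mul, sub_zero]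
        rw [sum_comm]
        exact sum_congr rfl fun x _ => sum_congr rfl fun y _ => by ring
    _ ≤ ∑ x, |g x| * η := sum_le_sum fun x _ => (le_abs_self _).trans
        (by rw [abs_mul]; exact mul_le_mul_of_nonneg_left (hf x) (abs_nonneg _))
    _ = η * ∑ x, |μ x - ν x| := by rw [← sum_mul, mul_comm]; rfl

lemma tvDist_vecMul_prod_ofFn_le [DecidableEq α] {n : ℕ} (K : Fin n → Matrix α α ℝ)
    (hK : ∀ i, IsSubstochastic (K i)) (Q : ℕ → α → ℝ) {ε : ℝ}
    (hQ : ∀ i : Fin n, tvDist (Q i ᵥ* K i) (Q ((i : ℕ) + 1)) ≤ ε) :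
    tvDist (Q 0 ᵥ* (List.ofFn K).prod) (Q n) ≤ n * ε := by
  induction n generalizing Q with
  | zero => simp [tvDist]
  | succ n ih =>
    set P := (List.ofFn fun i : Fin n => K i.succ).prod
    have hP : IsSubstochastic P := isSubstochastic_list_prod <| by
      simpa [List.forall_mem_ofFn_iff] using fun i : Fin n => hK i.succ
    have htail := ih (fun i : Fin n => K i.succ) (fun i => hK _) (fun t => Q (t + 1))
      (fun i => by simpa using hQ i.succ)
    rw [List.ofFn_succ, List.prod_cons, ← Matrix.vecMul_vecMul]
    calc _ ≤ tvDist ((Q 0 ᵥ* K 0) ᵥ* P) (Q 1 ᵥ* P) + tvDist (Q 1 ᵥ* P) (Q (n + 1)) :=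
          tvDist_triangle _ _ _
      _ ≤ ε + n * ε := add_le_add ((tvDist_vecMul_le hP _ _).trans (by simpa using hQ 0)) htail
      _ = (n + 1 : ℕ) * ε := by push_cast; ring

end Kernels

lemma le_pow_add_div_of_le_mul_add {d : ℕ → ℝ} {η c : ℝ} (hη0 : 0 ≤ η) (hη1 : η < 1)
    (hc : 0 ≤ c) (h0 : d 0 ≤ 1) (hd : ∀ t, d (t + 1) ≤ η * d t + c) (t : ℕ) :
    d t ≤ η ^ t + c / (1 - η) := by
  have hfix : η * (c / (1 - η)) + c = c / (1 - η) := by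
    field_simp [(sub_pos.2 hη1).ne']; ring
  induction t with
  | zero => have := div_nonneg hc (sub_pos.2 hη1).le; rw [pow_zero]; linarith
  | succ t ih =>
    calc d (t + 1) ≤ η * d t + c := hd t
      _ ≤ η * (η ^ t + c / (1 - η)) + c := by gcongr
      _ = η ^ (t + 1) + c / (1 - η) := by rw [pow_succ]; linarith

lemma pow_le_of_logb_lt {η a : ℝ} {τ : ℕ} (hη0 : 0 ≤ η) (hη1 : η < 1) (ha : 1 ≤ a)
    (hτ : Real.logb (2 / (1 + η)) a < τ) : η ^ τ ≤ 2 * η / ((1 + η) * a) := by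
  set b := 2 / (1 + η)
  have hb : 1 < b := by rw [lt_div_iff₀ (by linarith)]; linarith
  have hab : a < b ^ τ := by
    rw [← Real.rpow_natCast]; exact (Real.logb_lt_iff_lt_rpow hb (by linarith)).1 hτ
  have hτ0 : τ ≠ 0 := by
    rintro rfl
    linarith [Real.logb_nonneg hb ha, (Nat.cast_zero : ((0 : ℕ) : ℝ) = 0)]
  have hηb : η * b ≤ 1 := by rw [mul_div_assoc', div_le_one (by linarith)]; linarith
  -- since `τ ≥ 1`, one factor `η b` of `(η b) ^ τ` survives; it supplies the `η` in the bound
  have key : η ^ τ * a ≤ η * b :=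
    calc η ^ τ * a ≤ η ^ τ * b ^ τ := by gcongr
      _ = (η * b) ^ τ := (mul_pow _ _ _).symm
      _ ≤ η * b := pow_le_of_le_one (by positivity) hηb hτ0
  rw [le_div_iff₀ (by positivity)]
  calc η ^ τ * ((1 + η) * a) = (1 + η) * (η ^ τ * a) := by ring
    _ ≤ (1 + η) * (η * b) := by gcongr
    _ = 2 * η := by simp only [b]; field_simp

lemma pow_add_div_le_of_logb_lt {η N T l c : ℝ} {τ : ℕ} (hη0 : 0 ≤ η) (hη1 : η < 1)
    (hN : 1 ≤ N) (hl : 0 < l) (hlc : l * c * T = (1 - η) ^ 2)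
    (hT : 2 * (2 * N / (1 - η)) / l ≤ T)
    (hτ : Real.logb (2 / (1 + η)) ((1 - η) * l * T / (4 * N)) < τ) :
    η ^ τ + c / (1 - η) ≤ 2 * N * (1 + η) / (l * (1 - η)) / T := by
  have h1η : 0 < 1 - η := by linarith
  have hT0 : 0 < T := lt_of_lt_of_le (by positivity) hT
  have ha : 1 ≤ (1 - η) * l * T / (4 * N) := by
    rw [le_div_iff₀ (by positivity), one_mul]
    rw [div_le_iff₀ hl, mul_div_assoc', div_le_iff₀ h1η] at hT
    linarith
  have hc : c = (1 - η) ^ 2 / (l * T) := by field_simp; linarith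
  refine (add_le_add_left (pow_le_of_logb_lt hη0 hη1 ha hτ) _).trans (le_of_sub_nonneg ?_)
  have hgap : 2 * N * (1 + η) / (l * (1 - η)) / T
      - (2 * η / ((1 + η) * ((1 - η) * l * T / (4 * N))) + c / (1 - η))
      = (1 - η) * (2 * N - (1 + η)) / ((1 + η) * l * T) := by
    rw [hc]; field_simp; ring
  rw [hgap]
  exact div_nonneg (mul_nonneg h1η.le (by linarith)) (by positivity)

section GibbsKernel

variable {N : ℕ} {π : GState N → ℝ}

lemma update_eq_update_of_agree {i : Fin N} {x y : GState N} (h : ∀ j, j ≠ i → x j = y j)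
    (b : Bool) : Function.update x i b = Function.update y i b := by
  rw [Function.update_eq_iff]
  simp +contextual [Function.update_of_ne, h]

lemma condProb_congr {i : Fin N} {x y : GState N} (h : ∀ j, j ≠ i → x j = y j) (b : Bool) :
    condProb π i x b = condProb π i y b := by
  simp only [condProb, update_eq_update_of_agree h]

lemma condProb_nonneg (hπ0 : ∀ x, 0 ≤ π x) (i : Fin N) (x : GState N) (b : Bool) :
    0 ≤ condProb π i x b :=
  div_nonneg (hπ0 _) (add_nonneg (hπ0 _) (hπ0 _))

lemma le_apply_update_true_add_apply_update_false (hπ0 : ∀ x, 0 ≤ π x) (i : Fin N)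
    (x : GState N) : π x ≤ π (Function.update x i true) + π (Function.update x i false) := by
  conv_lhs => rw [← Function.update_eq_self i x]
  cases x i
  · linarith [hπ0 (Function.update x i true)]
  · linarith [hπ0 (Function.update x i false)]

lemma condProb_mul_add (hπ0 : ∀ x, 0 ≤ π x) (i : Fin N) (x : GState N) (b : Bool) :
    condProb π i x b * (π (Function.update x i true) + π (Function.update x i false))
      = π (Function.update x i b) := by
  rcases (add_nonneg (hπ0 (Function.update x i true)) (hπ0 (Function.update x i false))).eq_or_lt
    with hS | hS
  · have : π (Function.update x i b) = 0 := by
      cases b <;> linarith [hπ0 (Function.update x i true), hπ0 (Function.update x i false)]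
    rw [← hS, mul_zero, this]
  · exact div_mul_cancel₀ _ hS.ne'

lemma sum_condProb_le_one (hπ0 : ∀ x, 0 ≤ π x) (i : Fin N) (x : GState N) :
    ∑ b, condProb π i x b ≤ 1 := by
  rcases (add_nonneg (hπ0 (Function.update x i true)) (hπ0 (Function.update x i false))).eq_or_lt
    with hS | hS
  · simp [condProb, ← hS]
  · rw [Fintype.sum_bool, condProb, condProb, ← add_div, div_self hS.ne']

lemma condProb_le_one (hπ0 : ∀ x, 0 ≤ π x) (i : Fin N) (x : GState N) (b : Bool) :
    condProb π i x b ≤ 1 := by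
  have := sum_condProb_le_one hπ0 i x
  rw [Fintype.sum_bool] at this
  cases b <;> linarith [condProb_nonneg hπ0 i x true, condProb_nonneg hπ0 i x false]

lemma condProb_add_eq_one (hπ0 : ∀ x, 0 ≤ π x) {x : GState N} (hx : 0 < π x) (i : Fin N) :
    condProb π i x true + condProb π i x false = 1 := by
  have := le_apply_update_true_add_apply_update_false hπ0 i x
  rw [condProb, condProb, ← add_div, div_self (by linarith)]

lemma sum_ite_agree (i : Fin N) (x : GState N) (f : GState N → ℝ) :
    ∑ y, (if ∀ j, j ≠ i → x j = y j then f y else 0) = ∑ b, f (Function.update x i b) := by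
  rw [← sum_filter]
  refine sum_nbij' (fun y => y i) (fun b => Function.update x i b) (by simp) ?_ ?_ (by simp) ?_
  · simp +contextual [Function.update_of_ne]
  · intro y hy
    replace hy : ∀ j, j ≠ i → x j = y j := by simpa using hy
    exact Function.update_eq_iff.2 ⟨rfl, hy⟩
  · intro y hy
    replace hy : ∀ j, j ≠ i → x j = y j := by simpa using hy
    rw [Function.update_eq_iff.2 ⟨rfl, hy⟩]

lemma stepKernel_isSubstochastic (hπ0 : ∀ x, 0 ≤ π x) (i : Fin N) :
    IsSubstochastic (stepKernel π i) := by
  refine ⟨fun x y => ?_, fun x => ?_⟩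
  · unfold stepKernel
    split_ifs
    exacts [condProb_nonneg hπ0 i x _, le_rfl]
  · simpa [stepKernel, sum_ite_agree] using sum_condProb_le_one hπ0 i x

lemma stepKernel_vecMul_self (hπ0 : ∀ x, 0 ≤ π x) (i : Fin N) :
    π ᵥ* stepKernel π i = π := by
  funext y
  have hagree : ∀ x : GState N, (∀ j, j ≠ i → x j = y j) ↔ ∀ j, j ≠ i → y j = x j :=
    fun x => forall₂_congr fun _ _ => eq_comm
  calc (π ᵥ* stepKernel π i) y
      = ∑ x, if ∀ j, j ≠ i → y j = x j then π x * condProb π i y (y i) else 0 := by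
        refine sum_congr rfl fun x _ => ?_
        simp only [stepKernel, mul_ite, mul_zero, ← hagree x]
        split_ifs with h
        · rw [condProb_congr h]
        · rfl
    _ = condProb π i y (y i) * (π (Function.update y i true) + π (Function.update y i false)) := by
        rw [sum_ite_agree, Fintype.sum_bool]; ring
    _ = π y := by rw [condProb_mul_add hπ0, Function.update_eq_self]

lemma sweepKernel_vecMul_self (hπ0 : ∀ x, 0 ≤ π x) : π ᵥ* sweepKernel π = π :=
  vecMul_list_prod_eq_self <| by
    simpa [List.forall_mem_ofFn_iff] using stepKernel_vecMul_self hπ0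

end GibbsKernel

section Scan

variable {N : ℕ}

lemma scanVar_sweep (hN : 0 < N) (k j : ℕ) (hj : j < N) :
    scanVar N hN (k * N + j + 1) = ⟨j, hj⟩ := by
  ext
  simp [scanVar, Nat.mod_eq_of_lt hj]

lemma scanVar_sweep_ne (hN : 0 < N) (k j e : ℕ) (hj : j < N) (he : 0 < e) (heN : e < N) :
    scanVar N hN (k * N + j + e + 1) ≠ ⟨j, hj⟩ := by
  intro h
  have hmod : (k * N + j + e) % N = (k * N + j + 0) % N := by
    simpa [scanVar, Nat.mod_eq_of_lt hj] using congrArg Fin.val h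
  have := Nat.ModEq.add_left_cancel' (k * N + j) hmod
  rw [Nat.ModEq, Nat.mod_eq_of_lt heN, Nat.zero_mod] at this
  omega

end Scan

section EmpiricalDistribution

variable {N : ℕ}

lemma empDist_apply (X : ℕ → GState N) (τ T : ℕ) (y : GState N) :
    empDist X τ T y = (∑ k ∈ Ico τ (τ + T), if X (k * N) = y then 1 else 0) / T := by
  simp only [empDist, card_filter, Nat.cast_sum, Nat.cast_ite, Nat.cast_one, Nat.cast_zero]

lemma vecMul_empDist (X : ℕ → GState N) (τ T : ℕ) (K : Matrix (GState N) (GState N) ℝ)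
    (y : GState N) :
    (empDist X τ T ᵥ* K) y = (∑ k ∈ Ico τ (τ + T), K (X (k * N)) y) / T := by
  simp only [vecMul, dotProduct, empDist_apply, div_mul_eq_mul_div, sum_mul, ite_mul, one_mul,
    zero_mul, ← sum_div]
  rw [sum_comm]
  simp only [sum_ite_eq, mem_univ, if_true]

lemma sum_empDist (X : ℕ → GState N) (τ : ℕ) {T : ℕ} (hT : 0 < T) :
    ∑ x, empDist X τ T x = 1 := by
  simp only [empDist_apply, ← sum_div]
  rw [sum_comm]
  simp [hT.ne']

lemma empDist_nonneg (X : ℕ → GState N) (τ T : ℕ) (x : GState N) : 0 ≤ empDist X τ T x := by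
  unfold empDist
  positivity

lemma empDist_shift (X : ℕ → GState N) (τ T : ℕ) :
    empDist (fun t => X (t + N)) τ T = empDist X (τ + 1) T := by
  funext y
  simp only [empDist_apply]
  rw [add_right_comm, ← map_add_right_Ico, sum_map]
  simp [add_one_mul]

end EmpiricalDistribution

lemma stepKernel_sub_ite {N : ℕ} {π : GState N → ℝ} {i : Fin N} {x x' y : GState N}
    (hx' : ∀ j, j ≠ i → x' j = x j) :
    stepKernel π i x y - (if x' = y then 1 else 0) =
      if ∀ j, j ≠ i → x j = y j then condProb π i y (y i) - (if x' i = y i then 1 else 0)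
      else 0 := by
  unfold stepKernel
  by_cases h : ∀ j, j ≠ i → x j = y j
  · have hx'y : x' = y ↔ x' i = y i :=
      ⟨fun h' => h' ▸ rfl, fun h' => funext fun j =>
        if hj : j = i then hj ▸ h' else (hx' j hj).trans (h j hj)⟩
    simp only [if_pos h, hx'y, condProb_congr h]
  · have hx'y : x' ≠ y := fun h' => h fun j hj => (hx' j hj).symm.trans (congrFun h' j)
    simp [h, hx'y]

lemma condProb_sub_ite_eq {N : ℕ} {π : GState N → ℝ} {i : Fin N} {y : GState N}
    (hnorm : condProb π i y true + condProb π i y false = 1) (b c : Bool) :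
    condProb π i y c - (if b = c then 1 else 0) =
      (if c then 1 else -1) * (condProb π i y true - if b = true then 1 else 0) := by
  cases b <;> cases c <;> simp <;> linarith

-- `d` is the offset between the herded weight and the weight that decides the emitted bit.
lemma add_sub_ite_mem_Ioc {p w d : ℝ} (hp0 : 0 ≤ p) (hp1 : p ≤ 1) (hd : |d| < 1)
    (hw : w ∈ Set.Ioc (p - 2) (p + 1)) :
    w + (p - if 0 < w - d then 1 else 0) ∈ Set.Ioc (p - 2) (p + 1) := by
  obtain ⟨hd1, hd2⟩ := abs_lt.1 hd
  obtain ⟨hw1, hw2⟩ := hw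
  split_ifs with h <;> constructor <;> linarith

namespace HerdedGibbs

variable {N : ℕ} {hN : 0 < N} {π : GState N → ℝ} (hg : HerdedGibbs N hN π)

lemma W_succ (t : ℕ) (i : Fin N) (x : GState N) :
    hg.W (t + 1) i x = hg.W t i x +
      if i = scanVar N hN (t + 1) ∧ ∀ j, j ≠ i → x j = hg.X t j then
        condProb π i x true - (if hg.X (t + 1) i = true then 1 else 0)
      else 0 := by
  by_cases h : i = scanVar N hN (t + 1) ∧ ∀ j, j ≠ i → x j = hg.X t j
  · rw [if_pos h]
    obtain ⟨rfl, hx⟩ := h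
    rw [hg.w_active t x hx]; ring
  · rw [if_neg h, hg.w_frozen t i x h, add_zero]

lemma X_succ (t : ℕ) :
    hg.X (t + 1) = Function.update (hg.X t) (scanVar N hN (t + 1))
      (decide (0 < hg.W t (scanVar N hN (t + 1)) (hg.X t))) :=
  Function.eq_update_iff.2 ⟨hg.step_cur t, hg.step_other t⟩

lemma W_sub_W_eq {i : Fin N} {x y : GState N} (h : ∀ j, j ≠ i → x j = y j) (t : ℕ) :
    hg.W t i x - hg.W t i y = hg.W 0 i x - hg.W 0 i y := by
  induction t with
  | zero => rfl
  | succ t ih =>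
    have hxy : (∀ j, j ≠ i → x j = hg.X t j) ↔ ∀ j, j ≠ i → y j = hg.X t j :=
      forall₂_congr fun j hj => by rw [h j hj]
    rw [hg.W_succ, hg.W_succ, condProb_congr h]
    simp only [hxy]
    linarith

lemma W_mem_Ioc (hπ0 : ∀ x, 0 ≤ π x) (t : ℕ) (i : Fin N) (x : GState N) :
    hg.W t i x ∈ Set.Ioc (condProb π i x true - 2) (condProb π i x true + 1) := by
  induction t generalizing x with
  | zero => exact ⟨by linarith [(hg.init_w i x).1], by linarith [(hg.init_w i x).2]⟩
  | succ t ih =>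
    rw [hg.W_succ]
    by_cases h : i = scanVar N hN (t + 1) ∧ ∀ j, j ≠ i → x j = hg.X t j
    · rw [if_pos h]
      obtain ⟨rfl, hx⟩ := h
      set v := scanVar N hN (t + 1)
      set d := hg.W 0 v x - hg.W 0 v (hg.X t)
      have hd : |d| < 1 := by
        have h0 := hg.init_w v x
        have h1 := hg.init_w v (hg.X t)
        rw [condProb_congr hx] at h0
        exact abs_sub_lt_iff.2 ⟨by linarith, by linarith⟩
      have hcur : hg.W t v (hg.X t) = hg.W t v x - d := by linarith [hg.W_sub_W_eq hx t]
      have hbit : hg.X (t + 1) v = true ↔ 0 < hg.W t v x - d := by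
        rw [← hcur, hg.step_cur, decide_eq_true_eq]
      simp only [hbit]
      exact add_sub_ite_mem_Ioc (condProb_nonneg hπ0 _ _ _)
        (condProb_le_one hπ0 _ _ _) hd (ih x)
    · rw [if_neg h, add_zero]; exact ih x

lemma W_nonpos_of_condProb_eq_zero {i : Fin N} {x : GState N}
    (hp : condProb π i x true = 0) (t : ℕ) : hg.W t i x ≤ 0 := by
  induction t with
  | zero => linarith [(hg.init_w i x).2]
  | succ t ih => rw [hg.W_succ, hp]; split_ifs <;> linarith

lemma W_pos_of_condProb_eq_one {i : Fin N} {x : GState N}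
    (hp : condProb π i x true = 1) (t : ℕ) : 0 < hg.W t i x := by
  induction t with
  | zero => linarith [(hg.init_w i x).1]
  | succ t ih => rw [hg.W_succ, hp]; split_ifs <;> linarith

lemma pi_X_pos (hπ0 : ∀ x, 0 ≤ π x) (t : ℕ) : 0 < π (hg.X t) := by
  induction t with
  | zero => exact hg.init_support
  | succ t ih =>
    set v := scanVar N hN (t + 1)
    have hS := le_apply_update_true_add_apply_update_false hπ0 v (hg.X t)
    rw [hg.X_succ]
    -- a successor of zero mass would pin `condProb` of the current bit to `0` or `1`, and then
    -- the sign of the weight could never have selected it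
    refine (hπ0 _).lt_of_ne' fun h0 => ?_
    cases hb : decide (0 < hg.W t v (hg.X t)) <;> rw [hb] at h0
    · have hp : condProb π v (hg.X t) true = 1 := by
        rw [condProb, h0, add_zero, div_self (by linarith)]
      exact absurd (hg.W_pos_of_condProb_eq_one hp t) (by simpa using hb)
    · have hp : condProb π v (hg.X t) true = 0 := by rw [condProb, h0, zero_div]
      exact absurd (hg.W_nonpos_of_condProb_eq_zero hp t) (by simpa using hb)

lemma W_eq_of_forall_scanVar_ne {a b : ℕ} (hab : a ≤ b) {i : Fin N}
    (hi : ∀ s, a ≤ s → s < b → scanVar N hN (s + 1) ≠ i) (x : GState N) :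
    hg.W b i x = hg.W a i x := by
  induction b, hab using Nat.le_induction with
  | base => rfl
  | succ b hab ih =>
    rw [hg.W_succ, if_neg fun h => hi b hab (Nat.lt_succ_self b) h.1.symm, add_zero,
      ih fun s h1 h2 => hi s h1 (by omega)]

lemma W_sweep (k j : ℕ) (hj : j < N) (z : GState N) :
    hg.W ((k + 1) * N + j) ⟨j, hj⟩ z = hg.W (k * N + j) ⟨j, hj⟩ z +
      if ∀ j', j' ≠ ⟨j, hj⟩ → hg.X (k * N + j) j' = z j' then
        condProb π ⟨j, hj⟩ z true - (if hg.X (k * N + j + 1) ⟨j, hj⟩ = true then 1 else 0)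
      else 0 := by
  rw [add_one_mul]
  have hfrozen : hg.W (k * N + N + j) ⟨j, hj⟩ z = hg.W (k * N + j + 1) ⟨j, hj⟩ z := by
    refine hg.W_eq_of_forall_scanVar_ne (by omega) (fun s hs1 hs2 => ?_) z
    obtain ⟨e, rfl⟩ : ∃ e, s = k * N + j + e := ⟨s - (k * N + j), by omega⟩
    exact scanVar_sweep_ne hN k j e hj (by omega) (by omega)
  rw [hfrozen, hg.W_succ, scanVar_sweep hN k j hj]
  simp only [true_and, @eq_comm _ (z _)]

lemma abs_sum_sweep_increment_lt (hπ0 : ∀ x, 0 ≤ π x) (τ T j : ℕ) (hj : j < N)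
    (z : GState N) :
    |∑ k ∈ Ico τ (τ + T), if ∀ j', j' ≠ ⟨j, hj⟩ → hg.X (k * N + j) j' = z j' then
        condProb π ⟨j, hj⟩ z true - (if hg.X (k * N + j + 1) ⟨j, hj⟩ = true then 1 else 0)
      else 0| < 3 := by
  have htel := sum_Ico_sub (fun k => hg.W (k * N + j) ⟨j, hj⟩ z) (Nat.le_add_right τ T)
  simp only [hg.W_sweep, add_sub_cancel_left] at htel
  rw [htel]
  have h1 := hg.W_mem_Ioc hπ0 ((τ + T) * N + j) ⟨j, hj⟩ z
  have h2 := hg.W_mem_Ioc hπ0 (τ * N + j) ⟨j, hj⟩ z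
  exact abs_sub_lt_iff.2 ⟨by linarith [h1.2, h2.1], by linarith [h1.1, h2.2]⟩

lemma abs_sum_substep_error_lt (hπ0 : ∀ x, 0 ≤ π x) (τ T j : ℕ) (hj : j < N)
    (y : GState N) :
    |∑ k ∈ Ico τ (τ + T), if ∀ j', j' ≠ ⟨j, hj⟩ → hg.X (k * N + j) j' = y j' then
        condProb π ⟨j, hj⟩ y (y ⟨j, hj⟩)
          - (if hg.X (k * N + j + 1) ⟨j, hj⟩ = y ⟨j, hj⟩ then 1 else 0)
      else 0| < 3 := by
  set v : Fin N := ⟨j, hj⟩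
  -- a visited conditioning class has positive mass, so the two conditionals sum to one
  have hflip : ∀ k, (if ∀ j', j' ≠ v → hg.X (k * N + j) j' = y j' then
        condProb π v y (y v) - (if hg.X (k * N + j + 1) v = y v then 1 else 0) else 0)
      = (if y v then 1 else -1) * (if ∀ j', j' ≠ v → hg.X (k * N + j) j' = y j' then
        condProb π v y true - (if hg.X (k * N + j + 1) v = true then 1 else 0) else 0) := by
    intro k
    by_cases h : ∀ j', j' ≠ v → hg.X (k * N + j) j' = y j'
    · simp only [if_pos h]
      refine condProb_sub_ite_eq ?_ _ _
      rw [← condProb_congr h, ← condProb_congr h]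
      exact condProb_add_eq_one hπ0 (hg.pi_X_pos hπ0 _) v
    · simp only [if_neg h, mul_zero]
  rw [sum_congr rfl fun k _ => hflip k, ← mul_sum, abs_mul]
  have hsign : |(if y v then 1 else -1 : ℝ)| = 1 := by split_ifs <;> simp
  rw [hsign, one_mul]
  exact hg.abs_sum_sweep_increment_lt hπ0 τ T j hj y

lemma tvDist_substep_le (hπ0 : ∀ x, 0 ≤ π x) (τ T j : ℕ) (hj : j < N) :
    tvDist (empDist (fun t => hg.X (t + j)) τ T ᵥ* stepKernel π ⟨j, hj⟩)
      (empDist (fun t => hg.X (t + (j + 1))) τ T) ≤ 3 * Fintype.card (GState N) / (2 * T) := by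
  have hy : ∀ y, |(empDist (fun t => hg.X (t + j)) τ T ᵥ* stepKernel π ⟨j, hj⟩) y
      - empDist (fun t => hg.X (t + (j + 1))) τ T y| ≤ 3 / T := by
    intro y
    rw [vecMul_empDist, empDist_apply, ← sub_div, ← sum_sub_distrib, abs_div, Nat.abs_cast]
    gcongr ?_ / _
    have hstep : ∀ k, ∀ j', j' ≠ ⟨j, hj⟩ → hg.X (k * N + (j + 1)) j' = hg.X (k * N + j) j' :=
      fun k j' hj' => hg.step_other (k * N + j) j' (by rwa [scanVar_sweep hN k j hj])
    rw [sum_congr rfl fun k _ => stepKernel_sub_ite (hstep k)]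
    exact (hg.abs_sum_substep_error_lt hπ0 τ T j hj y).le
  unfold tvDist
  calc (∑ y, |_|) / 2 ≤ (∑ _y : GState N, 3 / (T : ℝ)) / 2 := by gcongr with y; exact hy y
    _ = 3 * Fintype.card (GState N) / (2 * T) := by
        rw [sum_const, card_univ, nsmul_eq_mul]; ring

lemma tvDist_sweep_le (hπ0 : ∀ x, 0 ≤ π x) (τ T : ℕ) :
    tvDist (empDist hg.X τ T ᵥ* sweepKernel π) (empDist hg.X (τ + 1) T)
      ≤ N * (3 * Fintype.card (GState N) / (2 * T)) := by
  have h := tvDist_vecMul_prod_ofFn_le (stepKernel π) (stepKernel_isSubstochastic hπ0)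
    (fun j => empDist (fun t => hg.X (t + j)) τ T)
    (fun i => hg.tvDist_substep_le hπ0 τ T i i.2)
  rwa [empDist_shift] at h

lemma tvDist_empDist_succ_le (hπ0 : ∀ x, 0 ≤ π x) (hπ1 : ∑ x, π x = 1) {T : ℕ} (hT : 0 < T)
    (t : ℕ) :
    tvDist (empDist hg.X (t + 1) T) π ≤ dobrushin (sweepKernel π) * tvDist (empDist hg.X t T) π
      + N * (3 * Fintype.card (GState N) / (2 * T)) := by
  calc tvDist (empDist hg.X (t + 1) T) π
      ≤ tvDist (empDist hg.X (t + 1) T) (empDist hg.X t T ᵥ* sweepKernel π)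
        + tvDist (empDist hg.X t T ᵥ* sweepKernel π) (π ᵥ* sweepKernel π) := by
        rw [sweepKernel_vecMul_self hπ0]; exact tvDist_triangle _ _ _
    _ ≤ N * (3 * Fintype.card (GState N) / (2 * T))
        + dobrushin (sweepKernel π) * tvDist (empDist hg.X t T) π := by
        gcongr
        · rw [tvDist_comm]; exact hg.tvDist_sweep_le hπ0 t T
        · exact tvDist_vecMul_le_dobrushin _ (by rw [sum_empDist _ _ hT, hπ1])
    _ = _ := add_comm _ _

end HerdedGibbs

/-- Main theorem: O(1/T) convergence of herded Gibbs on complete graphs: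
for a fully connected graph, herded Gibbs with a fixed scanning order whose corresponding
Gibbs sweep kernel has Dobrushin coefficient η < 1 admits constants l > 0 and B > 0 such
that d_v(P_T⁽ᵗ⁾ − π) ≤ λ/T for all T ≥ T* := 2B/l and τ > τ*(T), where
λ = 2N(1+η)/(l(1−η)) and τ*(T) = log_{2/(1+η)}((1−η)lT/(4N)). -/
theorem herded_gibbs_main_convergence {N : ℕ} (hN : 0 < N)
    (π : GState N → ℝ) (hπ0 : ∀ x, 0 ≤ π x) (hπ1 : ∑ x, π x = 1)
    (hg : HerdedGibbs N hN π)
    (hη : dobrushin (sweepKernel π) < 1) :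
    ∃ l B : ℝ, 0 < l ∧ 0 < B ∧
      ∀ T τ : ℕ, 2 * B / l ≤ (T : ℝ) →
        Real.logb (2 / (1 + dobrushin (sweepKernel π)))
            ((1 - dobrushin (sweepKernel π)) * l * (T : ℝ) / (4 * N)) < (τ : ℝ) →
        tvDist (empDist hg.X τ T) π
          ≤ (2 * (N : ℝ) * (1 + dobrushin (sweepKernel π))
              / (l * (1 - dobrushin (sweepKernel π)))) / (T : ℝ) := by
  set η := dobrushin (sweepKernel π)
  have hη0 : 0 ≤ η := dobrushin_nonneg _
  have h1η : 0 < 1 - η := by linarith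
  have hN1 : (1 : ℝ) ≤ N := by exact_mod_cast hN
  set δ : ℝ := N * (3 * Fintype.card (GState N) / 2)
  have hδ : 0 < δ := mul_pos (by linarith) (by positivity)
  have hl : 0 < (1 - η) ^ 2 / δ := div_pos (pow_pos h1η 2) hδ
  have hB : 0 < 2 * N / (1 - η) := div_pos (by linarith) h1η
  refine ⟨(1 - η) ^ 2 / δ, 2 * N / (1 - η), hl, hB, fun T τ hT hτ => ?_⟩
  have hT0 : 0 < T := by
    have : (0 : ℝ) < T := lt_of_lt_of_le (div_pos (by linarith) hl) hT
    exact_mod_cast this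
  calc tvDist (empDist hg.X τ T) π
      ≤ η ^ τ + N * (3 * Fintype.card (GState N) / (2 * T)) / (1 - η) :=
        le_pow_add_div_of_le_mul_add (d := fun t => tvDist (empDist hg.X t T) π) hη0 hη
          (by positivity)
          (tvDist_le_one (empDist_nonneg _ _ _) hπ0 (sum_empDist _ _ hT0) hπ1)
          (hg.tvDist_empDist_succ_le hπ0 hπ1 hT0) τ
    _ ≤ _ := pow_add_div_le_of_logb_lt hη0 hη hN1 hl
          (by simp only [δ]; field_simp) hT hτ
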